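/- Quantitative uniform estimate: for f ∈ C([a,b],[0,1]) and positive null sequences δ_n, Δ_n with 1/(nδ_n) → 0 and 1/(nΔ_n) → 0, one has ‖D_n^{(m)}(f) − f‖_∞ ≤ (ω(f,Δ_n)/𝒜)(‖χ‖₁ + M̃₁(χ)/(nΔ_n)) + max( m_{1+α}(φ_σ)/(φ_σ(2)(nδ_n)^{1+α}), ω(f,δ_n) ), where ω(f,δ) is the modulus of continuity of f on [a,b]. -/

import Mathlib

/-!
At a node `k` with `|nx - k| ≤ nδ` the Durrmeyer mean `∫ χ(nt-k) f(t) dt / ∫ χ(nt-k) dt` lies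
within `ω(δ) + ω(Δ)/𝒜 · (‖χ‖₁ + M̃₁(χ)/(nΔ))` of `f(x)`: compare `f(t)` with `f(k/n)` through
`ω(λΔ) ≤ (1 + λ) ω(Δ)`, and bound the denominator below by `𝒜/n`. Since `φ_σ` is even and
decreasing on `[0, ∞)` (concavity of `σ` there), the normalised weight
`φ_σ(nx-k) / max_d φ_σ(nx-d)` is at most `m_{1+α}(φ_σ)/(φ_σ(2)(nδ)^{1+α})` at the far nodes and
equals `1` at some node within distance `2` of `nx`. So every `min(mean, weight)` is below `f(x)`
plus the error, and the one at that peak node is above `f(x)` minus it; when `nδ < 2` the second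
error term already exceeds `1`.
-/

open MeasureTheory

/-- The kernel `φ_σ` built from a sigmoidal function `σ`. -/
noncomputable def phiSigma (σ : ℝ → ℝ) (x : ℝ) : ℝ := (σ (x + 1) - σ (x - 1)) / 2

/-- The Durrmeyer-type max-min neural network operator `D_n^{(m)}`. -/
noncomputable def Dmm (χ σ : ℝ → ℝ) (a b : ℤ) (n : ℕ) (f : ℝ → ℝ) (x : ℝ) : ℝ :=
  sSup ((fun k : ℤ =>
      min ((∫ t in (a:ℝ)..(b:ℝ), χ ((n : ℝ) * t - (k : ℝ)) * f t) /
            (∫ t in (a:ℝ)..(b:ℝ), χ ((n : ℝ) * t - (k : ℝ))))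
        (phiSigma σ ((n : ℝ) * x - (k : ℝ)) /
          sSup ((fun d : ℤ => phiSigma σ ((n : ℝ) * x - (d : ℝ))) ''
            Set.Icc ((n : ℤ) * a) ((n : ℤ) * b - 1)))) ''
    Set.Icc ((n : ℤ) * a) ((n : ℤ) * b - 1))

open Set

theorem ConcaveOn.map_add_sub_le_map_add_sub {s : Set ℝ} {g : ℝ → ℝ} (hg : ConcaveOn ℝ s g)
    {p q L : ℝ} (hp : p ∈ s) (hqL : q + L ∈ s) (hpq : p ≤ q) (hL : 0 ≤ L) :
    g (q + L) - g q ≤ g (p + L) - g p := by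
  rcases hL.eq_or_lt with rfl | hL
  · simp
  rcases hpq.eq_or_lt with rfl | hpq
  · rfl
  have hD : 0 < q + L - p := by linarith
  have chord : ∀ θ ∈ Icc (0:ℝ) 1, (1 - θ) * g p + θ * g (q + L) ≤ g (p + θ * (q + L - p)) :=
    fun θ hθ => by
      simpa [smul_eq_mul, show (1 - θ) * p + θ * (q + L) = p + θ * (q + L - p) by ring]
        using hg.2 hp hqL (sub_nonneg.2 hθ.2) hθ.1 (by ring)
  have hθ : ∀ r, 0 ≤ r → r ≤ q + L - p → r / (q + L - p) ∈ Icc (0:ℝ) 1 := fun r hr hr' =>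
    ⟨div_nonneg hr hD.le, (div_le_one hD).2 hr'⟩
  have h1 := chord _ (hθ L hL.le (by linarith))
  have h2 := chord _ (hθ (q - p) (by linarith) (by linarith))
  rw [div_mul_cancel₀ _ hD.ne'] at h1 h2
  have hsum : L / (q + L - p) + (q - p) / (q + L - p) = 1 := by field_simp; ring
  rw [show p + (q - p) = q by ring] at h2
  linear_combination h1 + h2 + (g p - g (q + L)) * hsum

section Sigmoid

variable {σ : ℝ → ℝ}

theorem phiSigma_neg (hsymm : ∀ x, σ (-x) = 1 - σ x) (y : ℝ) :
    phiSigma σ (-y) = phiSigma σ y := by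
  simp only [phiSigma, show -y + 1 = -(y - 1) by ring, show -y - 1 = -(y + 1) by ring, hsymm]
  ring

theorem phiSigma_abs (hsymm : ∀ x, σ (-x) = 1 - σ x) (y : ℝ) :
    phiSigma σ |y| = phiSigma σ y := by
  rcases abs_choice y with h | h <;> rw [h]
  exact phiSigma_neg hsymm y

theorem phiSigma_nonneg (hmono : Monotone σ) (y : ℝ) : 0 ≤ phiSigma σ y := by
  have := hmono (show y - 1 ≤ y + 1 by linarith)
  unfold phiSigma; linarith

theorem phiSigma_two_pos (h31 : σ 1 < σ 3) : 0 < phiSigma σ 2 := by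
  unfold phiSigma; norm_num; linarith

/-- `φ_σ(y) = (σ(y+1) + σ(1-y) - 1)/2`: on `[0,1]` both arguments are in `[0,∞)`, where the
increments of the concave `σ` decrease; beyond `1` the same holds for `σ(y+1) - σ(y-1)`. -/
theorem phiSigma_antitoneOn (hsymm : ∀ x, σ (-x) = 1 - σ x)
    (hconc : ConcaveOn ℝ (Ici 0) σ) : AntitoneOn (phiSigma σ) (Ici 0) := by
  intro y (hy : 0 ≤ y) y' (hy' : 0 ≤ y') hyy
  have hσ_sub_one : ∀ z : ℝ, σ (z - 1) = 1 - σ (1 - z) := fun z => by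
    rw [← hsymm, neg_sub]
  have incr := fun {p q L : ℝ} (hp : 0 ≤ p) (hpq : p ≤ q) (hL : 0 ≤ L) =>
    hconc.map_add_sub_le_map_add_sub (p := p) (q := q) (L := L) (mem_Ici.2 hp)
      (mem_Ici.2 (by linarith)) hpq hL
  unfold phiSigma
  rcases le_or_gt y' 1 with h1 | h1
  · have := incr (p := 1 - y') (q := y + 1) (L := y' - y) (by linarith) (by linarith)
      (by linarith)
    rw [show 1 - y' + (y' - y) = 1 - y by ring, show y + 1 + (y' - y) = y' + 1 by ring] at this
    rw [hσ_sub_one y, hσ_sub_one y']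
    linarith
  rcases le_or_gt 1 y with h2 | h2
  · have := incr (p := y - 1) (q := y' - 1) (L := 2) (by linarith) (by linarith) (by norm_num)
    rw [show y' - 1 + 2 = y' + 1 by ring, show y - 1 + 2 = y + 1 by ring] at this
    linarith
  · have left := incr (p := 0) (q := y + 1) (L := 1 - y) le_rfl (by linarith) (by linarith)
    have right := incr (p := 0) (q := 2) (L := y' - 1) le_rfl (by norm_num) (by linarith)
    have h0 : σ 0 = 1 / 2 := by have := hsymm 0; rw [neg_zero] at this; linarith
    rw [show y + 1 + (1 - y) = 2 by ring, zero_add] at left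
    rw [show (2:ℝ) + (y' - 1) = y' + 1 by ring, zero_add] at right
    rw [hσ_sub_one y]
    linarith

theorem phiSigma_two_le (hsymm : ∀ x, σ (-x) = 1 - σ x) (hconc : ConcaveOn ℝ (Ici 0) σ)
    {y : ℝ} (hy : |y| ≤ 2) : phiSigma σ 2 ≤ phiSigma σ y := by
  rw [← phiSigma_abs hsymm y]
  exact phiSigma_antitoneOn hsymm hconc (abs_nonneg y) (by norm_num : (0:ℝ) ≤ 2) hy

theorem phiSigma_le_two (hsymm : ∀ x, σ (-x) = 1 - σ x) (hconc : ConcaveOn ℝ (Ici 0) σ)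
    {y : ℝ} (hy : 2 ≤ |y|) : phiSigma σ y ≤ phiSigma σ 2 := by
  rw [← phiSigma_abs hsymm y]
  exact phiSigma_antitoneOn hsymm hconc (by norm_num : (0:ℝ) ≤ 2) (abs_nonneg y) hy

end Sigmoid

noncomputable def modulusOfContinuity (f : ℝ → ℝ) (s : Set ℝ) (δ : ℝ) : ℝ :=
  sSup {v : ℝ | ∃ x ∈ s, ∃ y ∈ s, |x - y| ≤ δ ∧ v = |f x - f y|}

section Modulus

variable {f : ℝ → ℝ} {s : Set ℝ} {u v δ : ℝ}

theorem abs_sub_le_modulusOfContinuity (hf : MapsTo f s (Icc 0 1)) (hu : u ∈ s) (hv : v ∈ s)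
    (huv : |u - v| ≤ δ) : |f u - f v| ≤ modulusOfContinuity f s δ := by
  refine le_csSup ⟨1, ?_⟩ ⟨u, hu, v, hv, huv, rfl⟩
  rintro _ ⟨x, hx, y, hy, -, rfl⟩
  obtain ⟨hx0, hx1⟩ := hf hx
  obtain ⟨hy0, hy1⟩ := hf hy
  rw [abs_le]; constructor <;> linarith

theorem modulusOfContinuity_nonneg (hf : MapsTo f s (Icc 0 1)) (hs : s.Nonempty)
    (hδ : 0 ≤ δ) : 0 ≤ modulusOfContinuity f s δ := by
  obtain ⟨u, hu⟩ := hs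
  exact (abs_nonneg _).trans (abs_sub_le_modulusOfContinuity hf hu hu (by simpa using hδ))

theorem abs_sub_le_natCast_mul_modulusOfContinuity (hs : Convex ℝ s) (hf : MapsTo f s (Icc 0 1))
    (hu : u ∈ s) (hv : v ∈ s) (N : ℕ) (huv : |u - v| ≤ N * δ) :
    |f u - f v| ≤ N * modulusOfContinuity f s δ := by
  rcases N.eq_zero_or_pos with rfl | hN
  · rw [Nat.cast_zero, zero_mul, abs_nonpos_iff, sub_eq_zero] at huv
    simp [huv]
  have hN' : (0:ℝ) < N := Nat.cast_pos.2 hN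
  set p : ℕ → ℝ := fun i => u + ((i : ℝ) / N) • (v - u)
  have hp : ∀ i ≤ N, p i ∈ s := fun i hi =>
    hs.add_smul_sub_mem hu hv ⟨by positivity, div_le_one_of_le₀ (by exact_mod_cast hi) hN'.le⟩
  have hstep : ∀ i < N, |f (p (i + 1)) - f (p i)| ≤ modulusOfContinuity f s δ := fun i hi => by
    refine abs_sub_le_modulusOfContinuity hf (hp _ hi) (hp _ hi.le) ?_
    have : p (i + 1) - p i = (v - u) / N := by simp only [p, smul_eq_mul]; push_cast; ring
    rw [this, abs_div, abs_sub_comm, abs_of_pos hN', div_le_iff₀ hN', mul_comm]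
    exact huv
  have htel : f v - f u = ∑ i ∈ Finset.range N, (f (p (i + 1)) - f (p i)) := by
    rw [Finset.sum_range_sub (fun i => f (p i))]
    simp [p, hN'.ne']
  calc |f u - f v| = |∑ i ∈ Finset.range N, (f (p (i + 1)) - f (p i))| := by
        rw [abs_sub_comm, htel]
    _ ≤ ∑ i ∈ Finset.range N, |f (p (i + 1)) - f (p i)| := Finset.abs_sum_le_sum_abs _ _
    _ ≤ ∑ _i ∈ Finset.range N, modulusOfContinuity f s δ :=
        Finset.sum_le_sum fun i hi => hstep i (Finset.mem_range.1 hi)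
    _ = N * modulusOfContinuity f s δ := by simp

theorem abs_sub_le_one_add_mul_modulusOfContinuity (hs : Convex ℝ s)
    (hf : MapsTo f s (Icc 0 1)) (hu : u ∈ s) (hv : v ∈ s) (hδ : 0 < δ) :
    |f u - f v| ≤ (1 + |u - v| / δ) * modulusOfContinuity f s δ := by
  set N := ⌊|u - v| / δ⌋₊ + 1
  have hN : |u - v| / δ < N := by simpa [N] using Nat.lt_floor_add_one (|u - v| / δ)
  have hN' : (N : ℝ) ≤ 1 + |u - v| / δ := by
    simpa [N, add_comm] using Nat.floor_le (div_nonneg (abs_nonneg (u - v)) hδ.le)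
  calc |f u - f v| ≤ N * modulusOfContinuity f s δ :=
        abs_sub_le_natCast_mul_modulusOfContinuity hs hf hu hv N ((div_le_iff₀ hδ).1 hN.le)
    _ ≤ (1 + |u - v| / δ) * modulusOfContinuity f s δ :=
        mul_le_mul_of_nonneg_right hN' (modulusOfContinuity_nonneg hf ⟨u, hu⟩ hδ.le)

end Modulus

theorem integral_comp_mul_sub_eq_inv_mul {F : ℝ → ℝ} {n : ℝ} (hn : 0 < n) (k : ℝ) :
    ∫ t, F (n * t - k) = n⁻¹ * ∫ u, F u := by
  rw [Measure.integral_comp_mul_left (fun y => F (y - k)) n, integral_sub_right_eq_self,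
    abs_of_pos (inv_pos.2 hn), smul_eq_mul]

theorem inv_mul_integral_unit_le_integral_comp_mul_sub {χ : ℝ → ℝ} (hχ0 : ∀ t, 0 ≤ χ t)
    (hχ : Integrable χ) {a b n k : ℝ} (hn : 0 < n) (hak : n * a ≤ k) (hkb : k + 1 ≤ n * b) :
    n⁻¹ * ∫ u in (0:ℝ)..1, χ u ≤ ∫ t in a..b, χ (n * t - k) := by
  have hunit : ∫ t in k / n..(k + 1) / n, χ (n * t - k) = n⁻¹ * ∫ u in (0:ℝ)..1, χ u := by
    rw [intervalIntegral.integral_comp_mul_sub _ hn.ne', smul_eq_mul,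
      mul_div_cancel₀ _ hn.ne', mul_div_cancel₀ _ hn.ne', sub_self, add_sub_cancel_left]
  rw [← hunit]
  refine intervalIntegral.integral_mono_interval ?_ ?_ ?_
    (Filter.Eventually.of_forall fun t => hχ0 _)
    ((hχ.comp_sub_right k).comp_mul_left' hn.ne').intervalIntegrable
  · rwa [le_div_iff₀ hn, mul_comm]
  · gcongr; linarith
  · rwa [div_le_iff₀ hn, mul_comm]

theorem abs_integral_mul_div_integral_sub_le {g f h : ℝ → ℝ} {a b y e : ℝ} (hab : a ≤ b)
    (hg0 : ∀ t, 0 ≤ g t) (hpos : 0 < ∫ t in a..b, g t)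
    (hg : IntervalIntegrable g volume a b)
    (hgf : IntervalIntegrable (fun t => g t * f t) volume a b)
    (hgh : IntervalIntegrable (fun t => g t * h t) volume a b)
    (hfh : ∀ t ∈ Icc a b, |f t - y| ≤ e + h t) :
    |(∫ t in a..b, g t * f t) / (∫ t in a..b, g t) - y|
      ≤ e + (∫ t in a..b, g t * h t) / ∫ t in a..b, g t := by
  have hgfy : IntervalIntegrable (fun t => g t * (f t - y)) volume a b := by
    simpa only [mul_sub] using hgf.sub (hg.mul_const y)
  have hdev : (∫ t in a..b, g t * f t) - (∫ t in a..b, g t) * y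
      = ∫ t in a..b, g t * (f t - y) := by
    simp only [mul_sub, intervalIntegral.integral_sub hgf (hg.mul_const y),
      intervalIntegral.integral_mul_const]
  have hbound : |∫ t in a..b, g t * (f t - y)| ≤ e * (∫ t in a..b, g t) + ∫ t in a..b, g t * h t :=
    calc |∫ t in a..b, g t * (f t - y)| ≤ ∫ t in a..b, |g t * (f t - y)| :=
          intervalIntegral.abs_integral_le_integral_abs hab
      _ ≤ ∫ t in a..b, (e * g t + g t * h t) := by
          refine intervalIntegral.integral_mono_on hab hgfy.abs ((hg.const_mul e).add hgh)
            fun t ht => ?_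
          rw [abs_mul, abs_of_nonneg (hg0 t)]
          nlinarith [hfh t ht, hg0 t]
      _ = e * (∫ t in a..b, g t) + ∫ t in a..b, g t * h t := by
          rw [intervalIntegral.integral_add (hg.const_mul e) hgh,
            intervalIntegral.integral_const_mul]
  rw [div_sub' hpos.ne', abs_div, abs_of_pos hpos, hdev, div_le_iff₀ hpos, add_mul,
    div_mul_cancel₀ _ hpos.ne']
  linarith

noncomputable def kernelMean (χ f : ℝ → ℝ) (a b n k : ℝ) : ℝ :=
  (∫ t in a..b, χ (n * t - k) * f t) / ∫ t in a..b, χ (n * t - k)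

theorem abs_kernelMean_sub_le {χ : ℝ → ℝ} (hχ0 : ∀ t, 0 ≤ χ t) (hχ : Integrable χ)
    (hχ1 : Integrable fun u => χ u * |u|) (hA : 0 < ∫ u in (0:ℝ)..1, χ u)
    {a b : ℝ} (hab : a ≤ b) {f : ℝ → ℝ} (hcont : ContinuousOn f (Icc a b))
    (hf : MapsTo f (Icc a b) (Icc 0 1)) {n k x δ Δ : ℝ} (hn : 0 < n) (hak : n * a ≤ k)
    (hkb : k + 1 ≤ n * b) (hx : x ∈ Icc a b) (hΔ : 0 < Δ) (hxk : |n * x - k| ≤ n * δ) :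
    |kernelMean χ f a b n k - f x| ≤
      (modulusOfContinuity f (Icc a b) Δ / ∫ u in (0:ℝ)..1, χ u) *
        ((∫ u, χ u) + (∫ u, χ u * |u|) / (n * Δ)) + modulusOfContinuity f (Icc a b) δ := by
  set ω := modulusOfContinuity f (Icc a b)
  set A := ∫ u in (0:ℝ)..1, χ u
  set C := (∫ u, χ u) + (∫ u, χ u * |u|) / (n * Δ)
  set c := k / n
  have hc : c ∈ Icc a b :=
    ⟨by rwa [le_div_iff₀ hn, mul_comm], by rw [div_le_iff₀ hn]; linarith⟩
  set g : ℝ → ℝ := fun t => χ (n * t - k)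
  have hg : Integrable g := (hχ.comp_sub_right k).comp_mul_left' hn.ne'
  -- the weight `χ(nt - k)(1 + |t - k/n|/Δ)`, rescaled to `u = nt - k`
  set H : ℝ → ℝ := fun u => χ u + χ u * |u| / (n * Δ)
  have hH : Integrable H := hχ.add (hχ1.div_const _)
  have hgH : ∀ t, g t * (ω Δ * (1 + |t - c| / Δ)) = ω Δ * H (n * t - k) := fun t => by
    have : |t - c| = |n * t - k| / n := by
      rw [← abs_of_pos hn, ← abs_div, abs_of_pos hn]; congr 1; simp only [c]; field_simp
    simp only [g, H, this]; field_simp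
  have hpoint : ∀ t ∈ Icc a b, |f t - f x| ≤ ω δ + ω Δ * (1 + |t - c| / Δ) := fun t ht => by
    have hcx : |c - x| ≤ δ := by
      rw [show c - x = -(n * x - k) / n by simp only [c]; field_simp; ring, abs_div, abs_neg,
        abs_of_pos hn]
      exact (div_le_iff₀' hn).2 hxk
    calc |f t - f x| ≤ |f t - f c| + |f c - f x| := abs_sub_le _ _ _
      _ ≤ (1 + |t - c| / Δ) * ω Δ + ω δ := add_le_add
          (abs_sub_le_one_add_mul_modulusOfContinuity (convex_Icc a b) hf ht hc hΔ)
          (abs_sub_le_modulusOfContinuity hf hc hx hcx)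
      _ = _ := by ring
  have hHk : Integrable fun t => H (n * t - k) := (hH.comp_sub_right k).comp_mul_left' hn.ne'
  have hnum : ∫ t in a..b, g t * (ω Δ * (1 + |t - c| / Δ)) ≤ ω Δ * (n⁻¹ * C) := by
    simp only [hgH, intervalIntegral.integral_const_mul]
    refine mul_le_mul_of_nonneg_left ?_ (modulusOfContinuity_nonneg hf ⟨x, hx⟩ hΔ.le)
    calc ∫ t in a..b, H (n * t - k) ≤ ∫ t, H (n * t - k) := by
          rw [intervalIntegral.integral_of_le hab]
          exact setIntegral_le_integral hHk (Filter.Eventually.of_forall fun t =>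
            add_nonneg (hχ0 _) (div_nonneg (mul_nonneg (hχ0 _) (abs_nonneg _)) (by positivity)))
      _ = n⁻¹ * C := by
          rw [integral_comp_mul_sub_eq_inv_mul hn, integral_add hχ (hχ1.div_const _),
            integral_div]
  have hden : n⁻¹ * A ≤ ∫ t in a..b, g t :=
    inv_mul_integral_unit_le_integral_comp_mul_sub hχ0 hχ hn hak hkb
  have hden0 : 0 < ∫ t in a..b, g t := (by positivity : 0 < n⁻¹ * A).trans_le hden
  calc |kernelMean χ f a b n k - f x|
      ≤ ω δ + (∫ t in a..b, g t * (ω Δ * (1 + |t - c| / Δ))) / ∫ t in a..b, g t := by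
        refine abs_integral_mul_div_integral_sub_le hab (fun t => hχ0 _) hden0
          hg.intervalIntegrable ?_ ?_ hpoint
        · exact (intervalIntegrable_iff_integrableOn_Icc_of_le hab).2
            (hg.integrableOn.mul_continuousOn hcont isCompact_Icc)
        · convert (hHk.const_mul (ω Δ)).intervalIntegrable using 1
          exact funext hgH
    _ ≤ ω δ + ω Δ * (n⁻¹ * C) / (n⁻¹ * A) := by
        gcongr
        · exact mul_nonneg (modulusOfContinuity_nonneg hf ⟨x, hx⟩ hΔ.le)
            (mul_nonneg (by positivity) (add_nonneg (integral_nonneg hχ0)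
              (div_nonneg (integral_nonneg fun u => mul_nonneg (hχ0 u) (abs_nonneg u))
                (by positivity))))
    _ = ω Δ / A * C + ω δ := by field_simp; ring

theorem abs_sSup_min_sub_le {ι : Type*} {K : Set ι} (hK : K.Finite) {A Φ d : ι → ℝ}
    {y r ε η : ℝ} (hy : y ∈ Icc 0 1) (hA0 : ∀ k ∈ K, 0 ≤ A k)
    (hnear : ∀ k ∈ K, d k ≤ r → |A k - y| ≤ η) (hfar : ∀ k ∈ K, r < d k → Φ k ≤ ε)
    (hpeak : ∃ k ∈ K, Φ k = 1 ∧ (d k ≤ r ∨ 1 ≤ ε)) :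
    |sSup ((fun k => min (A k) (Φ k)) '' K) - y| ≤ max ε η := by
  obtain ⟨k₀, hk₀, hΦk₀, hk₀'⟩ := hpeak
  have hlow : y - max ε η ≤ min (A k₀) (Φ k₀) := by
    rw [hΦk₀]
    rcases hk₀' with hd | hε
    · have := abs_le.1 (hnear k₀ hk₀ hd)
      refine le_min ?_ ?_ <;> linarith [le_max_right ε η, hy.2]
    · exact (by linarith [le_max_left ε η, hy.2] : y - max ε η ≤ 0).trans
        (le_min (hA0 k₀ hk₀) zero_le_one)
  have hup : ∀ k ∈ K, min (A k) (Φ k) ≤ y + max ε η := fun k hk => by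
    rcases le_or_gt (d k) r with hd | hd
    · linarith [min_le_left (A k) (Φ k), (abs_le.1 (hnear k hk hd)).2, le_max_right ε η]
    · linarith [min_le_right (A k) (Φ k), hfar k hk hd, le_max_left ε η, hy.1]
  rw [abs_sub_le_iff]
  constructor
  · linarith [csSup_le ⟨_, mem_image_of_mem _ hk₀⟩ (forall_mem_image.2 hup)]
  · linarith [le_csSup (hK.image (fun k => min (A k) (Φ k))).bddAbove (mem_image_of_mem _ hk₀)]

theorem exists_int_mem_Icc_abs_sub_le_one {A B : ℤ} (hAB : A < B) {y : ℝ} (hA : (A : ℝ) ≤ y)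
    (hB : y ≤ B) : ∃ d ∈ Icc A (B - 1), |y - d| ≤ 1 := by
  rcases hB.lt_or_eq with hB | rfl
  · have := Int.floor_lt.2 hB
    refine ⟨⌊y⌋, ⟨Int.le_floor.2 hA, by omega⟩, ?_⟩
    rw [← Int.fract, abs_of_nonneg (Int.fract_nonneg y)]
    exact (Int.fract_lt_one y).le
  · exact ⟨B - 1, ⟨by omega, le_rfl⟩, by norm_num⟩

section SigmoidSup

variable {σ : ℝ → ℝ} {K : Set ℤ} {z : ℝ} {d : ℤ}

theorem phiSigma_two_le_sSup (hsymm : ∀ x, σ (-x) = 1 - σ x) (hconc : ConcaveOn ℝ (Ici 0) σ)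
    (hK : K.Finite) (hd : d ∈ K) (hzd : |z - d| ≤ 2) :
    phiSigma σ 2 ≤ sSup ((fun j : ℤ => phiSigma σ (z - j)) '' K) :=
  (phiSigma_two_le hsymm hconc hzd).trans
    (le_csSup (hK.image _).bddAbove (mem_image_of_mem _ hd))

theorem exists_phiSigma_eq_sSup (hsymm : ∀ x, σ (-x) = 1 - σ x)
    (hconc : ConcaveOn ℝ (Ici 0) σ) (hK : K.Finite) (hd : d ∈ K) (hzd : |z - d| ≤ 2) :
    ∃ k ∈ K, phiSigma σ (z - k) = sSup ((fun j : ℤ => phiSigma σ (z - j)) '' K) ∧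
      |z - k| ≤ 2 := by
  obtain ⟨k, hk, hmax⟩ := (Set.Nonempty.image _ ⟨d, hd⟩).csSup_mem (hK.image
    (fun j : ℤ => phiSigma σ (z - j)))
  rcases le_or_gt |z - k| 2 with hzk | hzk
  · exact ⟨k, hk, hmax, hzk⟩
  -- a maximiser far from `z` forces the value `φ_σ(2)`, which `d` attains as well
  refine ⟨d, hd, le_antisymm (le_csSup (hK.image _).bddAbove (mem_image_of_mem _ hd)) ?_, hzd⟩
  rw [← hmax]
  exact (phiSigma_le_two hsymm hconc hzk.le).trans (phiSigma_two_le hsymm hconc hzd)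

end SigmoidSup

theorem abs_Dmm_sub_le {χ σ : ℝ → ℝ} {β : ℝ} (hβ : 0 ≤ β) (hχ0 : ∀ t, 0 ≤ χ t)
    (hχ : Integrable χ) (hχ1 : Integrable fun u => χ u * |u|) (hA : 0 < ∫ u in (0:ℝ)..1, χ u)
    (hmono : Monotone σ) (h31 : σ 1 < σ 3) (hsymm : ∀ x, σ (-x) = 1 - σ x)
    (hconc : ConcaveOn ℝ (Ici 0) σ)
    (hm : BddAbove {v : ℝ | ∃ (x : ℝ) (k : ℤ), v = phiSigma σ (x - k) * |x - k| ^ β})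
    {a b : ℤ} (hab : a < b) {f : ℝ → ℝ} (hcont : ContinuousOn f (Icc (a:ℝ) b))
    (hf : MapsTo f (Icc (a:ℝ) b) (Icc 0 1)) {n : ℕ} (hn : 0 < n) {δ Δ : ℝ} (hδ : 0 < δ)
    (hΔ : 0 < Δ) {x : ℝ} (hx : x ∈ Icc (a:ℝ) b) :
    |Dmm χ σ a b n f x - f x| ≤
      (modulusOfContinuity f (Icc (a:ℝ) b) Δ / ∫ u in (0:ℝ)..1, χ u) *
          ((∫ u, χ u) + (∫ u, χ u * |u|) / (n * Δ)) +
        max (sSup {v : ℝ | ∃ (x : ℝ) (k : ℤ), v = phiSigma σ (x - k) * |x - k| ^ β} /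
            (phiSigma σ 2 * (n * δ) ^ β))
          (modulusOfContinuity f (Icc (a:ℝ) b) δ) := by
  set m := sSup {v : ℝ | ∃ (x : ℝ) (k : ℤ), v = phiSigma σ (x - k) * |x - k| ^ β}
  set ω := modulusOfContinuity f (Icc (a:ℝ) b)
  set T := ω Δ / (∫ u in (0:ℝ)..1, χ u) * ((∫ u, χ u) + (∫ u, χ u * |u|) / (n * Δ))
  set K := Icc ((n:ℤ) * a) ((n:ℤ) * b - 1)
  set S := sSup ((fun j : ℤ => phiSigma σ (n * x - j)) '' K)
  have hn' : (0:ℝ) < n := Nat.cast_pos.2 hn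
  have hab' : (a:ℝ) ≤ b := by exact_mod_cast hab.le
  have hK : K.Finite := finite_Icc _ _
  have hφ2 := phiSigma_two_pos h31
  have hmy : ∀ y, phiSigma σ y * |y| ^ β ≤ m := fun y => le_csSup hm ⟨y, 0, by simp⟩
  obtain ⟨d, hd, hxd⟩ := exists_int_mem_Icc_abs_sub_le_one (y := n * x)
    (mul_lt_mul_of_pos_left hab (by exact_mod_cast hn : (0:ℤ) < n))
    (by push_cast; exact mul_le_mul_of_nonneg_left hx.1 hn'.le)
    (by push_cast; exact mul_le_mul_of_nonneg_left hx.2 hn'.le)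
  have hS : phiSigma σ 2 ≤ S := phiSigma_two_le_sSup hsymm hconc hK hd (hxd.trans one_le_two)
  have hT : 0 ≤ T := by
    refine mul_nonneg (div_nonneg (modulusOfContinuity_nonneg hf ⟨x, hx⟩ hΔ.le) hA.le)
      (add_nonneg (integral_nonneg hχ0) (div_nonneg ?_ (by positivity)))
    exact integral_nonneg fun u => mul_nonneg (hχ0 u) (abs_nonneg u)
  refine (abs_sSup_min_sub_le (A := fun k : ℤ => kernelMean χ f a b n k)
      (Φ := fun k : ℤ => phiSigma σ (n * x - k) / S) (d := fun k : ℤ => |n * x - k|)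
      (r := n * δ) hK (hf hx) (fun k _ => ?_) (fun k hk hxk => ?_) (fun k _ hxk => ?_) ?_).trans
    (max_le (le_add_of_nonneg_of_le hT (le_max_left _ _))
      (add_le_add le_rfl (le_max_right _ _)))
  · refine div_nonneg (intervalIntegral.integral_nonneg hab' fun t ht =>
      mul_nonneg (hχ0 _) (hf ht).1) (intervalIntegral.integral_nonneg hab' fun t _ => hχ0 _)
  · obtain ⟨hak, hkb⟩ := hk
    exact abs_kernelMean_sub_le hχ0 hχ hχ1 hA hab' hcont hf hn'
      (by exact_mod_cast hak) (by exact_mod_cast (by omega : k + 1 ≤ (n:ℤ) * b)) hx hΔ hxk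
  · have hφk := phiSigma_nonneg hmono (n * x - k)
    calc phiSigma σ (n * x - k) / S ≤ phiSigma σ (n * x - k) / phiSigma σ 2 :=
          div_le_div_of_nonneg_left hφk hφ2 hS
      _ ≤ m / (n * δ) ^ β / phiSigma σ 2 := by
          gcongr
          rw [le_div_iff₀ (by positivity)]
          exact (mul_le_mul_of_nonneg_left (Real.rpow_le_rpow (by positivity) hxk.le hβ)
            hφk).trans (hmy _)
      _ = m / (phiSigma σ 2 * (n * δ) ^ β) := by rw [div_div, mul_comm (_ ^ β)]
  · obtain ⟨k, hk, hmax, hxk⟩ := exists_phiSigma_eq_sSup hsymm hconc hK hd (hxd.trans one_le_two)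
    refine ⟨k, hk, by rw [hmax]; exact div_self (hφ2.trans_le hS).ne', ?_⟩
    rcases le_or_gt 2 (n * δ) with h2 | h2
    · exact Or.inl (hxk.trans h2)
    · refine Or.inr ((one_le_div (by positivity)).2 ?_)
      calc phiSigma σ 2 * (n * δ) ^ β ≤ phiSigma σ 2 * |2| ^ β := by
            rw [abs_two]; gcongr
        _ ≤ m := hmy 2

theorem Dmm_quantitative_estimate_general (χ σ : ℝ → ℝ) (α : ℝ) (hα : 0 < α)
    (hχ0 : ∀ t, 0 ≤ χ t) (hχint : Integrable χ)
    (hA : 0 < ∫ u in (0:ℝ)..1, χ u)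
    (hmono : Monotone σ)
    (h31 : σ 1 < σ 3)
    (hodd : ∀ x : ℝ, σ (-x) - 1/2 = -(σ x - 1/2))
    (hconc : ConcaveOn ℝ (Set.Ici 0) σ)
    (hM1 : Integrable (fun u : ℝ => χ u * |u|))
    (hmfin : BddAbove {v : ℝ | ∃ (x : ℝ) (k : ℤ), v = phiSigma σ (x - (k : ℝ)) * |x - (k : ℝ)| ^ (1 + α)})
    (a b : ℤ) (hab : a < b)
    (f : ℝ → ℝ) (hcont : ContinuousOn f (Set.Icc (a:ℝ) (b:ℝ)))
    (hf01 : ∀ t ∈ Set.Icc (a:ℝ) (b:ℝ), f t ∈ Set.Icc (0:ℝ) 1)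
    (ω : ℝ → ℝ)
    (hω : ∀ δ : ℝ, ω δ = sSup {v : ℝ | ∃ x ∈ Set.Icc (a:ℝ) (b:ℝ), ∃ y ∈ Set.Icc (a:ℝ) (b:ℝ),
        |x - y| ≤ δ ∧ v = |f x - f y|})
    (δseq Δseq : ℕ → ℝ) (hδpos : ∀ n, 0 < δseq n) (hΔpos : ∀ n, 0 < Δseq n) :
    ∀ n : ℕ, 0 < n →
      (⨆ x : Set.Icc (a:ℝ) (b:ℝ), |Dmm χ σ a b n f x - f x|) ≤
        (ω (Δseq n) / ∫ u in (0:ℝ)..1, χ u) *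
            ((∫ u : ℝ, χ u) + (∫ u : ℝ, χ u * |u|) / ((n : ℝ) * Δseq n)) +
          max
            (sSup {v : ℝ | ∃ (x : ℝ) (k : ℤ), v = phiSigma σ (x - (k : ℝ)) * |x - (k : ℝ)| ^ (1 + α)} /
              (phiSigma σ 2 * ((n : ℝ) * δseq n) ^ (1 + α)))
            (ω (δseq n)) := by
  intro n hn
  obtain rfl : ω = modulusOfContinuity f (Icc (a:ℝ) b) := funext hω
  have : Nonempty (Icc (a:ℝ) b) := (nonempty_Icc.2 (by exact_mod_cast hab.le)).to_subtype
  exact ciSup_le fun x => abs_Dmm_sub_le (by linarith) hχ0 hχint hM1 hA hmono h31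
    (fun x => by linarith [hodd x]) hconc hmfin hab hcont hf01 hn (hδpos n) (hΔpos n) x.2

theorem Dmm_quantitative_estimate (χ σ : ℝ → ℝ) (α : ℝ) (hα : 0 < α)
    (hχ0 : ∀ t, 0 ≤ χ t) (hχbdd : ∃ M, ∀ t, χ t ≤ M) (hχint : Integrable χ)
    (hA : 0 < ∫ u in (0:ℝ)..1, χ u)
    (hM0 : ∃ M : ℝ, ∀ t : ℝ, ∀ s : Finset ℤ, ∑ k ∈ s, χ (t - (k : ℝ)) ≤ M)
    (hmono : Monotone σ)
    (hbot : Filter.Tendsto σ Filter.atBot (nhds 0))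
    (htop : Filter.Tendsto σ Filter.atTop (nhds 1))
    (h31 : σ 1 < σ 3)
    (hodd : ∀ x : ℝ, σ (-x) - 1/2 = -(σ x - 1/2))
    (hC2 : ContDiff ℝ 2 σ) (hconc : ConcaveOn ℝ (Set.Ici 0) σ)
    (hdecay : ∃ C B : ℝ, 0 < C ∧ 0 < B ∧ ∀ x : ℝ, x ≤ -B → σ x ≤ C * |x| ^ (-(1 + α)))
    (hM1 : Integrable (fun u : ℝ => χ u * |u|))
    (hmfin : BddAbove {v : ℝ | ∃ (x : ℝ) (k : ℤ), v = phiSigma σ (x - (k : ℝ)) * |x - (k : ℝ)| ^ (1 + α)})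
    (a b : ℤ) (hab : a < b)
    (f : ℝ → ℝ) (hcont : ContinuousOn f (Set.Icc (a:ℝ) (b:ℝ)))
    (hf01 : ∀ t ∈ Set.Icc (a:ℝ) (b:ℝ), f t ∈ Set.Icc (0:ℝ) 1)
    (ω : ℝ → ℝ)
    (hω : ∀ δ : ℝ, ω δ = sSup {v : ℝ | ∃ x ∈ Set.Icc (a:ℝ) (b:ℝ), ∃ y ∈ Set.Icc (a:ℝ) (b:ℝ),
        |x - y| ≤ δ ∧ v = |f x - f y|})
    (δseq Δseq : ℕ → ℝ) (hδpos : ∀ n, 0 < δseq n) (hΔpos : ∀ n, 0 < Δseq n)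
    (hδ0 : Filter.Tendsto δseq Filter.atTop (nhds 0))
    (hΔ0 : Filter.Tendsto Δseq Filter.atTop (nhds 0))
    (hnδ : Filter.Tendsto (fun n : ℕ => 1 / ((n : ℝ) * δseq n)) Filter.atTop (nhds 0))
    (hnΔ : Filter.Tendsto (fun n : ℕ => 1 / ((n : ℝ) * Δseq n)) Filter.atTop (nhds 0)) :
    ∀ n : ℕ, 0 < n →
      (⨆ x : Set.Icc (a:ℝ) (b:ℝ), |Dmm χ σ a b n f x - f x|) ≤
        (ω (Δseq n) / ∫ u in (0:ℝ)..1, χ u) *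
            ((∫ u : ℝ, χ u) + (∫ u : ℝ, χ u * |u|) / ((n : ℝ) * Δseq n)) +
          max
            (sSup {v : ℝ | ∃ (x : ℝ) (k : ℤ), v = phiSigma σ (x - (k : ℝ)) * |x - (k : ℝ)| ^ (1 + α)} /
              (phiSigma σ 2 * ((n : ℝ) * δseq n) ^ (1 + α)))
            (ω (δseq n)) :=
  Dmm_quantitative_estimate_general χ σ α hα hχ0 hχint hA hmono h31 hodd hconc hM1 hmfin a b hab f
    hcont hf01 ω hω δseq Δseq hδpos hΔpos
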